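/- arXiv:1605.03208 — 2 statements merged into one kernel-verified Lean document; each statement's English description precedes it below -/
import Mathlib

section
/- Suppose P(Z(h) > -∞) = 1 for h∈T. Then for any distinct points t_1 = h, t_2, …, t_n ∈ T, the random vector (Ξ_h Z(t_2), …, Ξ_h Z(t_n)) has the same distribution as (W_2^{(1)} − W_1^{(1)}, …, W_n^{(1)} − W_1^{(1)}), where W^{(1)} is distributed as W conditioned on (W_1 > 0) and W is the associated generalised Pareto vector of (ζ_Z(t_1), …, ζ_Z(t_n)). -/
open MeasureTheory ProbabilityTheory Filter
open scoped ENNReal NNReal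

noncomputable section

/-- `e^x` for `x ∈ [-∞,∞]`, as an extended nonnegative real. -/
def expE (x : EReal) : ℝ≥0∞ :=
  if x = ⊤ then ⊤ else if x = ⊥ then 0 else ENNReal.ofReal (Real.exp x.toReal)

/-- `e^{-L}` for `L ∈ [0,∞]`. -/
def expNeg (L : ℝ≥0∞) : ℝ≥0∞ :=
  if L = ⊤ then 0 else ENNReal.ofReal (Real.exp (-L.toReal))

/-- natural logarithm, from `[0,∞]` to `[-∞,∞]`. -/
def logE (L : ℝ≥0∞) : EReal :=
  if L = 0 then ⊥ else if L = ⊤ then ⊤ else ((Real.log L.toReal : ℝ) : EReal)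

/-- Equality of all finite-dimensional distributions of two processes. -/
def SameFDD {T E Ω₁ Ω₂ : Type*} [MeasurableSpace Ω₁] [MeasurableSpace Ω₂] [MeasurableSpace E]
    (μ₁ : Measure Ω₁) (X : T → Ω₁ → E) (μ₂ : Measure Ω₂) (Y : T → Ω₂ → E) : Prop :=
  ∀ (n : ℕ) (t : Fin n → T),
    Measure.map (fun ω i => X (t i) ω) μ₁ = Measure.map (fun ω i => Y (t i) ω) μ₂

/-- `ζ` is (a version of) the max-stable process associated with the spectral process `Z`,
i.e. its finite-dimensional distributions are the ones of the de Haan representation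
`ζ_Z(t) = max_{i ≥ 1} (P_i + Z_i(t))` built from a Poisson point process `Σ ε_{P_i}` on `ℝ`
with intensity `e^{-x} dx`, independent of the i.i.d. copies `Z_i` of `Z`; equivalently
`P(ζ(t₁) ≤ x₁, …, ζ(tₙ) ≤ xₙ) = exp( - E[ max_i e^{Z(t_i) - x_i} ] )`. -/
def IsAssocMaxStable {T Ω Ω' : Type*} [MeasurableSpace Ω] [MeasurableSpace Ω']
    (μ' : Measure Ω') (ζ : T → Ω' → ℝ) (μ : Measure Ω) (Z : T → Ω → EReal) : Prop :=
  ∀ (n : ℕ) (t : Fin n → T) (x : Fin n → ℝ),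
    μ' {ω | ∀ i, ζ (t i) ω ≤ x i}
      = expNeg (∫⁻ ω, ⨆ i, expE (Z (t i) ω - (x i : EReal)) ∂μ)

/-- The law of the path `ω ↦ Z(·)(ω)` on the product σ-field. -/
def pathLaw {T Ω : Type*} [MeasurableSpace Ω] (μ : Measure Ω) (Z : T → Ω → EReal) :
    Measure (T → EReal) := Measure.map (fun ω t => Z t ω) μ

/-- Law of the exponentially tilted process `Z^{[h]}`:
`P(Z^{[h]} ∈ A) = E[ e^{Z(h)} 1_{Z ∈ A} ]`.  (When `P(Z(h) = -∞) > 0` this is the law of the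
tilt `V_h^{[h]}` of the conditional process `V_h = Z | (Z(h) > -∞)` by
`V_h(h) - ln E[e^{V_h(h)}]`, since the density `e^{f(h)}` vanishes on `{f : f(h) = -∞}`.) -/
def tiltLaw {T Ω : Type*} [MeasurableSpace Ω] (μ : Measure Ω) (Z : T → Ω → EReal) (h : T) :
    Measure (T → EReal) := (pathLaw μ Z).withDensity fun f => expE (f h)

/-- Law of the recentred tilted process `Θ_h = Ξ_h Z`, `Θ_h(t) = Z^{[h]}(t) - Z^{[h]}(h)`
(equal to `Θ_h(t) = V_h^{[h]}(t) - V_h^{[h]}(h)` in the general case). -/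
def ThetaLaw {T Ω : Type*} [MeasurableSpace Ω] (μ : Measure Ω) (Z : T → Ω → EReal) (h : T) :
    Measure (T → EReal) := Measure.map (fun f t => f t - f h) (tiltLaw μ Z h)

/-!
Put `Y i = Z (t i)` and let `Λ` be the image of `μ ⊗ e^{-u} du` under
`(ω, u) ↦ (u + Y i ω)ᵢ`. The `u`-section of `{g ≰ x}` is a ray of `e^{-u} du`-mass
`maxᵢ e^{Y i ω - x i}`, so `Λ {g ≰ x} = V x := E[maxᵢ e^{Y i - x i}]`: `Λ` is the exponent measure
of `(ζ (t i))ᵢ`, whose d.f. is `H = e^{-V}`. Hence `G x = (V (x ⊓ 0) - V x) / V 0`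
is `Λ ({g ≤ x} ∩ {g ≰ 0}) / V 0`, which identifies the law of `W`; conditioning on `W 0 > 0`
leaves `Λ` restricted to `{g 0 > 0}`. On that set the first marginal of `(ω, u)` has density
`e^{Y 0 ω}` (the mass of the ray `{u > -Y 0 ω}`), and `g i - g 0 = Y i ω - Y 0 ω` does not
depend on `u`. This is the law of `Z (t i) - Z h` under the tilt by `e^{Z h}`.
-/

open Set MeasurableSpace

instance : MeasurableSub₂ EReal :=
  ⟨(measurable_fst.add measurable_snd.neg : Measurable fun p : EReal × EReal => p.1 + -p.2)⟩

lemma EReal.coe_add_sub_coe_add (u : ℝ) (a b : EReal) : ((u : EReal) + a) - (u + b) = a - b := by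
  rw [EReal.add_sub_add_comm (.inl (EReal.coe_ne_bot u)) (.inl (EReal.coe_ne_top u)),
    ← EReal.coe_sub, _root_.sub_self, EReal.coe_zero, zero_add]

lemma EReal.Iic_bot_eq_iInter : Iic (⊥ : EReal) = ⋂ k : ℕ, Iic ((-k : ℝ) : EReal) := by
  ext g
  simp only [mem_Iic, le_bot_iff, mem_iInter]
  refine ⟨fun hg k => hg ▸ bot_le, fun hg => (EReal.eq_bot_iff_forall_lt g).2 fun y => ?_⟩
  obtain ⟨k, hk⟩ := exists_nat_gt (-y)
  exact (hg k).trans_lt (EReal.coe_lt_coe_iff.2 (by linarith))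

lemma EReal.measurableSpace_eq_generateFrom_Iic_ne_bot :
    (inferInstance : MeasurableSpace EReal) = generateFrom (Iic '' {x : EReal | x ≠ ⊥}) := by
  refine le_antisymm ?_ (generateFrom_le fun _ ⟨x, _, hs⟩ => hs ▸ measurableSet_Iic)
  rw [BorelSpace.measurable_eq (α := EReal), borel_eq_generateFrom_Iic]
  refine generateFrom_le ?_
  rintro _ ⟨x, rfl⟩
  rcases eq_or_ne x ⊥ with rfl | hx
  · rw [EReal.Iic_bot_eq_iInter]
    exact .iInter fun k => measurableSet_generateFrom ⟨_, EReal.coe_ne_bot _, rfl⟩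
  · exact measurableSet_generateFrom ⟨x, hx, rfl⟩

lemma EReal.isPiSystem_image_Iic_ne_bot : IsPiSystem (Iic '' {x : EReal | x ≠ ⊥}) := by
  rintro _ ⟨a, ha, rfl⟩ _ ⟨b, hb, rfl⟩ -
  exact ⟨a ⊓ b, min_rec' (· ≠ ⊥) ha hb, Iic_inter_Iic.symm⟩

lemma ext_of_Iic_of_ne_bot {ι : Type*} [Finite ι] {μ ν : Measure (ι → EReal)} [IsFiniteMeasure μ]
    (h : ∀ x : ι → EReal, (∀ i, x i ≠ ⊥) → μ (Iic x) = ν (Iic x)) : μ = ν := by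
  refine ext_of_generate_finite _ (generateFrom_eq_pi
      (fun _ => EReal.measurableSpace_eq_generateFrom_Iic_ne_bot.symm)
      fun _ => ⟨fun _ => Iic ⊤, fun _ => ⟨⊤, top_ne_bot, rfl⟩, by simp [iUnion_const]⟩).symm
    (IsPiSystem.pi fun _ => EReal.isPiSystem_image_Iic_ne_bot) ?_ ?_
  · rintro _ ⟨s, hs, rfl⟩
    choose x hx hxs using fun i => hs i (mem_univ i)
    rw [show s = fun i => Iic (x i) from funext fun i => (hxs i).symm, pi_univ_Iic]
    exact h x hx
  · simpa using h ⊤ fun _ => top_ne_bot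

lemma map_withDensity_comp {α β : Type*} [MeasurableSpace α] [MeasurableSpace β] {μ : Measure α}
    {f : α → β} (hf : Measurable f) {g : β → ℝ≥0∞} (hg : Measurable g) :
    (μ.withDensity (g ∘ f)).map f = (μ.map f).withDensity g := by
  ext s hs
  rw [Measure.map_apply hf hs, withDensity_apply _ (hf hs), withDensity_apply _ hs,
    setLIntegral_map hs hg hf, Function.comp_def]

lemma map_cond_preimage {α β : Type*} [MeasurableSpace α] [MeasurableSpace β] (μ : Measure α)
    {f : α → β} (hf : Measurable f) {s : Set β} (hs : MeasurableSet s) :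
    (μ[|f ⁻¹' s]).map f = (μ.map f)[|s] := by
  rw [ProbabilityTheory.cond, ProbabilityTheory.cond, Measure.map_smul,
    ← Measure.restrict_map hf hs, Measure.map_apply hf hs]

lemma expE_eq_exp : expE = EReal.exp := by
  funext x
  induction x using EReal.rec <;> simp [expE]

lemma expNeg_toReal {L : ℝ≥0∞} (hL : L ≠ ⊤) : (expNeg L).toReal = Real.exp (-L.toReal) := by
  rw [expNeg, if_neg hL, ENNReal.toReal_ofReal (Real.exp_nonneg _)]

lemma ofReal_log_div_log_expNeg {A B C : ℝ≥0∞} (hA : A ≠ ⊤) (hB : B ≠ ⊤) (hC₀ : C ≠ 0)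
    (hC : C ≠ ⊤) :
    ENNReal.ofReal (Real.log ((expNeg B).toReal / (expNeg A).toReal) /
        Real.log (expNeg C).toReal) = C⁻¹ * (B - A) := by
  have hC_pos : 0 < C.toReal := ENNReal.toReal_pos hC₀ hC
  rw [expNeg_toReal hA, expNeg_toReal hB, expNeg_toReal hC, ← Real.exp_sub, Real.log_exp,
    Real.log_exp, show (-B.toReal - -A.toReal) / -C.toReal = (B.toReal - A.toReal) / C.toReal by
      rw [div_neg, ← neg_div]; ring_nf,
    ENNReal.ofReal_div_of_pos hC_pos, ENNReal.ofReal_sub _ ENNReal.toReal_nonneg,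
    ENNReal.ofReal_toReal hA, ENNReal.ofReal_toReal hB, ENNReal.ofReal_toReal hC,
    ENNReal.div_eq_inv_mul]

def expNegVolume : Measure ℝ := volume.withDensity fun u => ENNReal.ofReal (Real.exp (-u))

instance : SigmaFinite expNegVolume := SigmaFinite.withDensity_ofReal _

lemma expNegVolume_Ioi (c : ℝ) : expNegVolume (Ioi c) = ENNReal.ofReal (Real.exp (-c)) := by
  rw [expNegVolume, withDensity_apply _ measurableSet_Ioi, ← ofReal_integral_eq_lintegral_ofReal,
    integral_exp_neg_Ioi]
  · simpa [IntegrableOn] using exp_neg_integrableOn_Ioi c one_pos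
  · exact Eventually.of_forall fun u => (Real.exp_pos _).le

lemma expNegVolume_setOf_lt {d : EReal} (hd : d ≠ ⊥) :
    expNegVolume {u : ℝ | d < u} = EReal.exp (-d) := by
  induction d using EReal.rec with
  | bot => exact absurd rfl hd
  | top => simp
  | coe d => simpa [← EReal.coe_neg, Ioi] using expNegVolume_Ioi d

lemma expNegVolume_setOf_lt_add {c y : EReal} (hc : c ≠ ⊥) (hy : y ≠ ⊤) :
    expNegVolume {u : ℝ | c < u + y} = EReal.exp (y - c) := by
  have hset : {u : ℝ | c < u + y} = {u : ℝ | c - y < u} := by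
    ext u
    exact (EReal.sub_lt_iff (.inr hc) (.inl hy)).symm
  have hcy : c - y ≠ ⊥ := by
    rw [sub_eq_add_neg]
    exact EReal.add_ne_bot_iff.2 ⟨hc, by simpa using hy⟩
  rw [hset, expNegVolume_setOf_lt hcy, EReal.neg_sub (.inl hc) (.inr hy), add_comm,
    sub_eq_add_neg]

lemma isUpperSet_setOf_lt_coe_add (c y : EReal) : IsUpperSet {u : ℝ | c < u + y} :=
  fun _ _ huv hu => hu.trans_le (add_le_add (EReal.coe_le_coe_iff.2 huv) le_rfl)

section ExponentMeasure

variable {Ω ι κ : Type*} [MeasurableSpace Ω]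

def exponentMeasure (μ : Measure Ω) (Y : ι → Ω → EReal) : Measure (ι → EReal) :=
  (μ.prod expNegVolume).map fun p i => (p.2 : EReal) + Y i p.1

def exponentFunction (μ : Measure Ω) (Y : ι → Ω → EReal) (x : ι → EReal) : ℝ≥0∞ :=
  ∫⁻ ω, ⨆ i, EReal.exp (Y i ω - x i) ∂μ

variable {μ : Measure Ω} {Y : ι → Ω → EReal}

lemma measurable_coe_snd_add {y : Ω → EReal} (hy : Measurable y) :
    Measurable fun p : Ω × ℝ => (p.2 : EReal) + y p.1 := by
  fun_prop

lemma measurable_coe_snd_add_pi (hY : ∀ i, Measurable (Y i)) :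
    Measurable fun (p : Ω × ℝ) i => (p.2 : EReal) + Y i p.1 :=
  measurable_pi_lambda _ fun i => measurable_coe_snd_add (hY i)

lemma lintegral_exp_le_exponentFunction_zero (j : ι) :
    ∫⁻ ω, EReal.exp (Y j ω) ∂μ ≤ exponentFunction μ Y 0 :=
  lintegral_mono fun ω => le_iSup_of_le j (by simp)

lemma exponentFunction_ne_top [Finite ι] (hYm : ∀ i, Measurable (Y i))
    (hY : ∀ i, ∫⁻ ω, EReal.exp (Y i ω) ∂μ ≠ ⊤) {x : ι → EReal} (hx : ∀ i, x i ≠ ⊥) :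
    exponentFunction μ Y x ≠ ⊤ := by
  have := Fintype.ofFinite ι
  refine ne_top_of_le_ne_top ?_ (lintegral_mono fun ω => iSup_le fun i =>
    Finset.single_le_sum (f := fun i => EReal.exp (Y i ω - x i)) (fun _ _ => zero_le)
      (Finset.mem_univ i))
  have hterm (i : ι) : ∫⁻ ω, EReal.exp (Y i ω - x i) ∂μ
      = (∫⁻ ω, EReal.exp (Y i ω) ∂μ) * EReal.exp (-x i) := by
    simp_rw [sub_eq_add_neg, EReal.exp_add]
    exact lintegral_mul_const' _ _ (EReal.exp_eq_top_iff.not.2 (by simpa using hx i))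
  rw [lintegral_finsetSum' _ fun i _ => ?_]
  · simp only [hterm]
    exact (ENNReal.sum_lt_top.2 fun i _ => ENNReal.mul_lt_top (hY i).lt_top
      (EReal.exp_lt_top_iff.2 (by simpa using hx i : -x i ≠ ⊤).lt_top)).ne
  · exact (EReal.measurable_exp.comp ((hYm i).sub_const _)).aemeasurable

lemma exponentMeasure_compl_Iic [SFinite μ] [Countable ι] (hY : ∀ i, Measurable (Y i))
    (hY_top : ∀ᵐ ω ∂μ, ∀ i, Y i ω ≠ ⊤) {x : ι → EReal} (hx : ∀ i, x i ≠ ⊥) :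
    exponentMeasure μ Y (Iic x)ᶜ = exponentFunction μ Y x := by
  rw [exponentMeasure, Measure.map_apply (measurable_coe_snd_add_pi hY) measurableSet_Iic.compl,
    Measure.prod_apply (measurable_coe_snd_add_pi hY measurableSet_Iic.compl)]
  refine lintegral_congr_ae (hY_top.mono fun ω hω => ?_)
  have hsection : Prod.mk ω ⁻¹' ((fun (p : Ω × ℝ) i => (p.2 : EReal) + Y i p.1) ⁻¹' (Iic x)ᶜ)
      = ⋃ i, {u : ℝ | x i < u + Y i ω} := by
    ext u
    simp [Pi.le_def]
  -- the sections are nested rays, so the measure of their union is a supremum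
  have hdir : Directed (· ⊆ ·) fun i => {u : ℝ | x i < u + Y i ω} := fun i j =>
    ((isUpperSet_setOf_lt_coe_add _ _).total (isUpperSet_setOf_lt_coe_add _ _)).elim
      (fun h => ⟨j, h, le_rfl⟩) fun h => ⟨i, le_rfl, h⟩
  simp only [hsection, hdir.measure_iUnion, expNegVolume_setOf_lt_add (hx _) (hω _)]

lemma exponentMeasure_Iic_inter_compl_Iic_zero [SFinite μ] [Finite ι]
    (hY : ∀ i, Measurable (Y i)) (hY_top : ∀ᵐ ω ∂μ, ∀ i, Y i ω ≠ ⊤)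
    (hY_exp : ∀ i, ∫⁻ ω, EReal.exp (Y i ω) ∂μ ≠ ⊤) {x : ι → EReal} (hx : ∀ i, x i ≠ ⊥) :
    exponentMeasure μ Y (Iic x ∩ (Iic 0)ᶜ)
      = exponentFunction μ Y (x ⊓ 0) - exponentFunction μ Y x := by
  have hx₀ (i : ι) : (x ⊓ 0) i ≠ ⊥ := min_rec' (· ≠ ⊥) (hx i) EReal.zero_ne_bot
  have hset : Iic x ∩ (Iic 0)ᶜ = (Iic (x ⊓ 0))ᶜ \ (Iic x)ᶜ := by
    rw [← Iic_inter_Iic, Set.sdiff_compl, compl_inter, union_inter_distrib_right,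
      compl_inter_self, empty_union, inter_comm]
  have hfin : exponentMeasure μ Y (Iic x)ᶜ ≠ ⊤ := by
    rw [exponentMeasure_compl_Iic hY hY_top hx]
    exact exponentFunction_ne_top hY hY_exp hx
  rw [hset, measure_sdiff (compl_subset_compl.2 (Iic_subset_Iic.2 inf_le_left))
      measurableSet_Iic.compl.nullMeasurableSet hfin, exponentMeasure_compl_Iic hY hY_top hx₀,
    exponentMeasure_compl_Iic hY hY_top hx]

lemma map_fst_restrict_prod_expNegVolume [SFinite μ] {y : Ω → EReal} (hy : Measurable y)
    (hy_top : ∀ᵐ ω ∂μ, y ω ≠ ⊤) :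
    ((μ.prod expNegVolume).restrict {p | 0 < (p.2 : EReal) + y p.1}).map Prod.fst
      = μ.withDensity fun ω => EReal.exp (y ω) := by
  ext C hC
  have hS : MeasurableSet {p : Ω × ℝ | 0 < (p.2 : EReal) + y p.1} :=
    measurable_coe_snd_add hy measurableSet_Ioi
  rw [Measure.map_apply measurable_fst hC, Measure.restrict_apply (measurable_fst hC),
    Measure.prod_apply ((measurable_fst hC).inter hS), withDensity_apply _ hC,
    ← lintegral_indicator hC]
  refine lintegral_congr_ae (hy_top.mono fun ω hω => ?_)
  dsimp only
  by_cases hωC : ω ∈ C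
  · have hsection : Prod.mk ω ⁻¹' (Prod.fst ⁻¹' C ∩ {p : Ω × ℝ | 0 < (p.2 : EReal) + y p.1})
        = {u : ℝ | 0 < (u : EReal) + y ω} := by
      ext u
      simp [hωC]
    rw [hsection, expNegVolume_setOf_lt_add EReal.zero_ne_bot hω, indicator_of_mem hωC,
      sub_zero]
  · have hsection :
        Prod.mk ω ⁻¹' (Prod.fst ⁻¹' C ∩ {p : Ω × ℝ | 0 < (p.2 : EReal) + y p.1}) = ∅ := by
      ext u
      simp [hωC]
    rw [hsection, measure_empty, indicator_of_notMem hωC]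

lemma exponentMeasure_setOf_pos [SFinite μ] (hY : ∀ i, Measurable (Y i)) (j : ι)
    (hY_top : ∀ᵐ ω ∂μ, Y j ω ≠ ⊤) :
    exponentMeasure μ Y {g | 0 < g j} = ∫⁻ ω, EReal.exp (Y j ω) ∂μ := by
  rw [exponentMeasure, Measure.map_apply (measurable_coe_snd_add_pi hY)
      (measurableSet_lt measurable_const (measurable_pi_apply j)),
    ← setLIntegral_univ, ← withDensity_apply _ MeasurableSet.univ,
    ← map_fst_restrict_prod_expNegVolume (hY j) hY_top,
    Measure.map_apply measurable_fst MeasurableSet.univ, preimage_univ,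
    Measure.restrict_apply MeasurableSet.univ, univ_inter]
  rfl

lemma map_sub_restrict_exponentMeasure [SFinite μ] (hY : ∀ i, Measurable (Y i)) (j : ι)
    (hY_top : ∀ᵐ ω ∂μ, Y j ω ≠ ⊤) (s : κ → ι) :
    ((exponentMeasure μ Y).restrict {g | 0 < g j}).map (fun g k => g (s k) - g j)
      = (μ.withDensity fun ω => EReal.exp (Y j ω)).map fun ω k => Y (s k) ω - Y j ω := by
  have hsub : Measurable fun (g : ι → EReal) k => g (s k) - g j := by fun_prop
  have hYsub : Measurable fun ω k => Y (s k) ω - Y j ω :=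
    measurable_pi_lambda _ fun k => (hY (s k)).sub (hY j)
  have hcomp : ((fun (g : ι → EReal) k => g (s k) - g j) ∘
      fun (p : Ω × ℝ) i => (p.2 : EReal) + Y i p.1)
      = (fun ω k => Y (s k) ω - Y j ω) ∘ Prod.fst := by
    funext p k
    exact EReal.coe_add_sub_coe_add _ _ _
  rw [exponentMeasure, Measure.restrict_map (measurable_coe_snd_add_pi hY)
      (measurableSet_lt measurable_const (measurable_pi_apply j)),
    Measure.map_map hsub (measurable_coe_snd_add_pi hY), hcomp,
    ← Measure.map_map hYsub measurable_fst]
  congr 1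
  exact map_fst_restrict_prod_expNegVolume (hY j) hY_top

def genParetoMeasure (μ : Measure Ω) (Y : ι → Ω → EReal) : Measure (ι → EReal) :=
  (exponentFunction μ Y 0)⁻¹ • (exponentMeasure μ Y).restrict (Iic 0)ᶜ

lemma genParetoMeasure_Iic [SFinite μ] [Finite ι] (hY : ∀ i, Measurable (Y i))
    (hY_top : ∀ᵐ ω ∂μ, ∀ i, Y i ω ≠ ⊤) (hY_exp : ∀ i, ∫⁻ ω, EReal.exp (Y i ω) ∂μ ≠ ⊤)
    {x : ι → EReal} (hx : ∀ i, x i ≠ ⊥) :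
    genParetoMeasure μ Y (Iic x)
      = (exponentFunction μ Y 0)⁻¹ * (exponentFunction μ Y (x ⊓ 0) - exponentFunction μ Y x) := by
  rw [genParetoMeasure, Measure.smul_apply, smul_eq_mul, Measure.restrict_apply measurableSet_Iic,
    exponentMeasure_Iic_inter_compl_Iic_zero hY hY_top hY_exp hx]

lemma cond_genParetoMeasure_setOf_pos [SFinite μ] [Finite ι] (hY : ∀ i, Measurable (Y i))
    (hY_exp : ∀ i, ∫⁻ ω, EReal.exp (Y i ω) ∂μ = 1) (hY_top : ∀ᵐ ω ∂μ, ∀ i, Y i ω ≠ ⊤) (j : ι) :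
    (genParetoMeasure μ Y)[|{g | 0 < g j}] = (exponentMeasure μ Y).restrict {g | 0 < g j} := by
  have hV₀ : exponentFunction μ Y 0 ≠ 0 := (zero_lt_one.trans_le
    ((hY_exp j).symm.trans_le (lintegral_exp_le_exponentFunction_zero j))).ne'
  have hV₀_top : exponentFunction μ Y 0 ≠ ⊤ :=
    exponentFunction_ne_top hY (fun i => (hY_exp i).trans_ne ENNReal.one_ne_top)
      fun _ => EReal.zero_ne_bot
  have hpos : {g : ι → EReal | 0 < g j} ⊆ (Iic 0)ᶜ := fun g hg hg0 => (hg.trans_le (hg0 j)).false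
  have hmeas : MeasurableSet {g : ι → EReal | 0 < g j} :=
    measurableSet_lt measurable_const (measurable_pi_apply j)
  rw [ProbabilityTheory.cond, genParetoMeasure, Measure.smul_apply, Measure.restrict_apply hmeas,
    inter_eq_left.2 hpos, exponentMeasure_setOf_pos hY j (hY_top.mono fun _ h => h j), hY_exp,
    Measure.restrict_smul, Measure.restrict_restrict_of_subset hpos, smul_smul, smul_eq_mul,
    mul_one, inv_inv, ENNReal.mul_inv_cancel hV₀ hV₀_top, one_smul]

end ExponentMeasure

section MaxStable

variable {T Ω Ω' Ω'' ι : Type*} [MeasurableSpace Ω] [MeasurableSpace Ω'] [MeasurableSpace Ω'']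
  {μ : Measure Ω} {μ' : Measure Ω'} {Z : T → Ω → EReal} {ζ : T → Ω' → ℝ}

lemma IsAssocMaxStable.measure_forall_le_coe [Fintype ι] (hζ : IsAssocMaxStable μ' ζ μ Z)
    (t : ι → T) (x : ι → ℝ) :
    μ' {ω | ∀ i, ζ (t i) ω ≤ x i}
      = expNeg (exponentFunction μ (fun i => Z (t i)) fun i => x i) := by
  let e := (Fintype.equivFin ι).symm
  have h := hζ _ (t ∘ e) (x ∘ e)
  simp only [expE_eq_exp, Function.comp_apply, Equiv.apply_symm_apply, e.forall_congr_left] at h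
  rw [h, exponentFunction]
  congr 1
  exact lintegral_congr fun ω => e.iSup_comp (g := fun i => EReal.exp (Z (t i) ω - x i))

lemma IsAssocMaxStable.measure_forall_le [Fintype ι] (hζ : IsAssocMaxStable μ' ζ μ Z)
    (t : ι → T) {x : ι → EReal} (hx : ∀ i, x i ≠ ⊥) :
    μ' {ω | ∀ i, (ζ (t i) ω : EReal) ≤ x i}
      = expNeg (exponentFunction μ (fun i => Z (t i)) x) := by
  classical
  -- `hζ` only covers real thresholds; coordinates with `x i = ⊤` constrain nothing
  have hfin (j : {i // x i ≠ ⊤}) : ((x j).toReal : EReal) = x j := EReal.coe_toReal j.2 (hx j)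
  have hset : {ω | ∀ i, (ζ (t i) ω : EReal) ≤ x i}
      = {ω | ∀ j : {i // x i ≠ ⊤}, ζ (t j) ω ≤ (x j).toReal} := by
    ext ω
    simp only [mem_ofPred_eq, ← EReal.coe_le_coe_iff, hfin, Subtype.forall]
    exact forall_congr' fun i => ⟨fun h _ => h, fun h => (eq_or_ne (x i) ⊤).elim
      (fun hi => hi ▸ le_top) h⟩
  have hsup (ω : Ω) : ⨆ j : {i // x i ≠ ⊤}, EReal.exp (Z (t j) ω - ((x j).toReal : EReal))
      = ⨆ i, EReal.exp (Z (t i) ω - x i) := by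
    simp only [hfin, iSup_subtype]
    refine iSup_congr fun i => (eq_or_ne (x i) ⊤).elim (fun hi => ?_) fun hi => iSup_pos hi
    simp [hi]
  rw [hset, hζ.measure_forall_le_coe, exponentFunction, exponentFunction]
  simp only [hsup]

def genParetoDF (μ' : Measure Ω') (ζ : T → Ω' → ℝ) (t : ι → T) (x : ι → EReal) : ℝ≥0∞ :=
  ENNReal.ofReal
    (Real.log ((μ' {ω | ∀ i, ((ζ (t i) ω : ℝ) : EReal) ≤ min (x i) 0}).toReal /
        (μ' {ω | ∀ i, ((ζ (t i) ω : ℝ) : EReal) ≤ x i}).toReal) /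
      Real.log ((μ' {ω | ∀ i, ζ (t i) ω ≤ 0}).toReal))

lemma IsAssocMaxStable.genParetoDF_eq [Fintype ι] [Nonempty ι] (hζ : IsAssocMaxStable μ' ζ μ Z)
    (hZ : ∀ s, Measurable (Z s)) (hZ_exp : ∀ s, ∫⁻ ω, EReal.exp (Z s ω) ∂μ = 1) (t : ι → T)
    {x : ι → EReal} (hx : ∀ i, x i ≠ ⊥) :
    genParetoDF μ' ζ t x = (exponentFunction μ (fun i => Z (t i)) 0)⁻¹ *
      (exponentFunction μ (fun i => Z (t i)) (x ⊓ 0)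
        - exponentFunction μ (fun i => Z (t i)) x) := by
  have hY_exp (i : ι) : ∫⁻ ω, EReal.exp (Z (t i) ω) ∂μ ≠ ⊤ :=
    (hZ_exp _).trans_ne ENNReal.one_ne_top
  have hx₀ (i : ι) : (x ⊓ 0) i ≠ ⊥ := min_rec' (· ≠ ⊥) (hx i) EReal.zero_ne_bot
  have hmin : μ' {ω | ∀ i, ((ζ (t i) ω : ℝ) : EReal) ≤ min (x i) 0}
      = expNeg (exponentFunction μ (fun i => Z (t i)) (x ⊓ 0)) := hζ.measure_forall_le t hx₀
  have hzero : μ' {ω | ∀ i, ζ (t i) ω ≤ 0} = expNeg (exponentFunction μ (fun i => Z (t i)) 0) := by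
    have h := hζ.measure_forall_le_coe t 0
    simp only [Pi.zero_apply, EReal.coe_zero] at h
    exact h
  obtain ⟨i₀⟩ := ‹Nonempty ι›
  rw [genParetoDF, hmin, hζ.measure_forall_le t hx, hzero,
    ofReal_log_div_log_expNeg (exponentFunction_ne_top (fun i => hZ _) hY_exp hx)
      (exponentFunction_ne_top (fun i => hZ _) hY_exp hx₀)
      (zero_lt_one.trans_le ((hZ_exp (t i₀)).symm.trans_le
        (lintegral_exp_le_exponentFunction_zero i₀))).ne'
      (exponentFunction_ne_top (x := 0) (fun i => hZ _) hY_exp fun _ => EReal.zero_ne_bot)]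

lemma map_eq_genParetoMeasure [Fintype ι] [Nonempty ι] [SFinite μ] {μ'' : Measure Ω''}
    [IsFiniteMeasure μ''] (hζ : IsAssocMaxStable μ' ζ μ Z) (hZ : ∀ s, Measurable (Z s))
    (hZ_top : ∀ s, ∀ᵐ ω ∂μ, Z s ω ≠ ⊤) (hZ_exp : ∀ s, ∫⁻ ω, EReal.exp (Z s ω) ∂μ = 1)
    (t : ι → T) {W : ι → Ω'' → EReal} (hW_meas : ∀ i, Measurable (W i))
    (hW : ∀ x, μ'' {ω | ∀ i, W i ω ≤ x i} = genParetoDF μ' ζ t x) :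
    μ''.map (fun ω i => W i ω) = genParetoMeasure μ fun i => Z (t i) := by
  -- at corners with some `x i = ⊥` the formula for `G` is junk (`log (0 / 0) = 0`)
  refine ext_of_Iic_of_ne_bot fun x hx => ?_
  rw [Measure.map_apply (measurable_pi_lambda _ hW_meas) measurableSet_Iic,
    genParetoMeasure_Iic (fun i => hZ _) (ae_all_iff.2 fun i => hZ_top _)
      (fun i => (hZ_exp _).trans_ne ENNReal.one_ne_top) hx,
    ← hζ.genParetoDF_eq hZ hZ_exp t hx]
  exact hW x

end MaxStable

lemma map_ThetaLaw {T Ω κ : Type*} [MeasurableSpace Ω] (μ : Measure Ω) {Z : T → Ω → EReal}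
    (hZ : ∀ t, Measurable (Z t)) (h : T) (s : κ → T) :
    (ThetaLaw μ Z h).map (fun f k => f (s k))
      = (μ.withDensity fun ω => EReal.exp (Z h ω)).map fun ω k => Z (s k) ω - Z h ω := by
  have hpath : Measurable fun ω t => Z t ω := measurable_pi_lambda _ hZ
  have hexp : Measurable fun f : T → EReal => expE (f h) := by
    rw [expE_eq_exp]; fun_prop
  rw [ThetaLaw, tiltLaw, pathLaw, ← map_withDensity_comp hpath hexp,
    Measure.map_map (by fun_prop) (by fun_prop), Measure.map_map (by fun_prop) hpath]
  simp only [Function.comp_def, expE_eq_exp]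

theorem statement_1_general {T Ω Ω' Ω'' : Type*}
    [MeasurableSpace Ω] [MeasurableSpace Ω'] [MeasurableSpace Ω'']
    (μ : Measure Ω) (μ' : Measure Ω') (μ'' : Measure Ω'')
    [IsProbabilityMeasure μ] [IsProbabilityMeasure μ'']
    (Z : T → Ω → EReal) (hZm : ∀ t, Measurable (Z t))
    (hZne : ∀ t, ∀ᵐ ω ∂μ, Z t ω ≠ ⊤)
    (hZexp : ∀ t, ∫⁻ ω, expE (Z t ω) ∂μ = 1)
    (ζ : T → Ω' → ℝ) (hζ : IsAssocMaxStable μ' ζ μ Z)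
    (n : ℕ) (t : Fin (n + 1) → T)
    (h : T) (hth : t 0 = h)
    -- `W` is the associated generalised Pareto vector: its d.f. (on `[-∞,∞]ⁿ⁺¹`) is `G`
    (W : Fin (n + 1) → Ω'' → EReal) (hWm : ∀ i, Measurable (W i))
    (hW : ∀ x : Fin (n + 1) → EReal,
      μ'' {ω | ∀ i, W i ω ≤ x i} =
        ENNReal.ofReal
          (Real.log ((μ' {ω | ∀ i, ((ζ (t i) ω : ℝ) : EReal) ≤ min (x i) 0}).toReal /
              (μ' {ω | ∀ i, ((ζ (t i) ω : ℝ) : EReal) ≤ x i}).toReal) /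
            Real.log ((μ' {ω | ∀ i, ζ (t i) ω ≤ 0}).toReal))) :
    Measure.map (fun (f : T → EReal) (i : Fin n) => f (t i.succ)) (ThetaLaw μ Z h)
      = Measure.map (fun ω (i : Fin n) => W i.succ ω - W 0 ω)
          (ProbabilityTheory.cond μ'' {ω | 0 < W 0 ω}) := by
  subst hth
  simp only [expE_eq_exp] at hZexp
  have hW_meas : Measurable fun ω (i : Fin (n + 1)) => W i ω := measurable_pi_lambda _ hWm
  have hpos_meas : MeasurableSet {g : Fin (n + 1) → EReal | 0 < g 0} :=
    measurableSet_lt measurable_const (measurable_pi_apply 0)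
  calc _ = (μ.withDensity fun ω => EReal.exp (Z (t 0) ω)).map
          fun ω (i : Fin n) => Z (t i.succ) ω - Z (t 0) ω :=
        map_ThetaLaw μ hZm (t 0) (t ∘ Fin.succ)
    _ = ((exponentMeasure μ fun i => Z (t i)).restrict {g | 0 < g 0}).map
          fun g (i : Fin n) => g i.succ - g 0 :=
        (map_sub_restrict_exponentMeasure (fun i => hZm _) 0 (hZne _) Fin.succ).symm
    _ = ((genParetoMeasure μ fun i => Z (t i))[|{g | 0 < g 0}]).map
          fun g (i : Fin n) => g i.succ - g 0 := by
        rw [cond_genParetoMeasure_setOf_pos (fun i => hZm _) (fun i => hZexp _)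
          (ae_all_iff.2 fun i => hZne _)]
    _ = _ := by
        rw [← map_eq_genParetoMeasure hζ hZm hZne hZexp t hWm hW,
          ← map_cond_preimage μ'' hW_meas hpos_meas, Measure.map_map (by fun_prop) hW_meas]
        rfl

/-- Theorem 1 (i).
If `P(Z(h) > -∞) = 1`, then for distinct `t₁ = h, t₂, …, tₙ₊₁` the vector
`(Ξ_h Z(t₂), …, Ξ_h Z(tₙ₊₁))` has the same law as `(W₂ - W₁, …, Wₙ₊₁ - W₁)` conditioned on
`W₁ > 0`, where `W` is the associated generalised Pareto vector of `(ζ_Z(t₁), …, ζ_Z(tₙ₊₁))`,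
i.e. the random vector with distribution function
`G(x) = (ln H(0))⁻¹ ln( H(min(x,0)) / H(x) )`, `H` the d.f. of `(ζ_Z(t₁), …, ζ_Z(tₙ₊₁))`. -/
theorem statement_1 {T Ω Ω' Ω'' : Type*}
    [MeasurableSpace Ω] [MeasurableSpace Ω'] [MeasurableSpace Ω'']
    (μ : Measure Ω) (μ' : Measure Ω') (μ'' : Measure Ω'')
    [IsProbabilityMeasure μ] [IsProbabilityMeasure μ'] [IsProbabilityMeasure μ'']
    (Z : T → Ω → EReal) (hZm : ∀ t, Measurable (Z t))
    (hZne : ∀ t, ∀ᵐ ω ∂μ, Z t ω ≠ ⊤)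
    (hZexp : ∀ t, ∫⁻ ω, expE (Z t ω) ∂μ = 1)
    (ζ : T → Ω' → ℝ) (hζ : IsAssocMaxStable μ' ζ μ Z)
    (n : ℕ) (t : Fin (n + 1) → T) (ht : Function.Injective t)
    (h : T) (hth : t 0 = h)
    (hfin : μ {ω | Z h ω = ⊥} = 0)
    -- `W` is the associated generalised Pareto vector: its d.f. (on `[-∞,∞]ⁿ⁺¹`) is `G`
    (W : Fin (n + 1) → Ω'' → EReal) (hWm : ∀ i, Measurable (W i))
    (hW : ∀ x : Fin (n + 1) → EReal,
      μ'' {ω | ∀ i, W i ω ≤ x i} =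
        ENNReal.ofReal
          (Real.log ((μ' {ω | ∀ i, ((ζ (t i) ω : ℝ) : EReal) ≤ min (x i) 0}).toReal /
              (μ' {ω | ∀ i, ((ζ (t i) ω : ℝ) : EReal) ≤ x i}).toReal) /
            Real.log ((μ' {ω | ∀ i, ζ (t i) ω ≤ 0}).toReal))) :
    Measure.map (fun (f : T → EReal) (i : Fin n) => f (t i.succ)) (ThetaLaw μ Z h)
      = Measure.map (fun ω (i : Fin n) => W i.succ ω - W 0 ω)
          (ProbabilityTheory.cond μ'' {ω | 0 < W 0 ω}) :=
  statement_1_general μ μ' μ'' Z hZm hZne hZexp ζ hζ n t h hth W hWm hW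

end
end

section
/- Let Z(t), t∈T, take values in [-∞,∞) with E[exp(Z(t))] = 1 for all t and P(Z(h) > -∞) ∈ (0,1] for h∈T. Define Ξ_h Z(t) = J_h Θ_h(t) + (1−J_h)[W_h(t) − V_h^{[h]}(h)] − ln P(J_h = 1). Then for every h∈T the associated max-stable processes satisfy ζ_Z =fdd ζ_{Ξ_h Z}. Moreover, for any probability measure μ on T, ζ_Z =fdd η, where η(t) = max_{i≥1}(P_i + Ξ_{T_i} Z_i(t)) and (P_i, T_i) are the points of a Poisson point process on ℝ×T with intensity e^{-p}dp·μ(dt) independent of the i.i.d. copies Z_i of Z. -/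
open MeasureTheory ProbabilityTheory Filter
open scoped ENNReal NNReal

noncomputable section

/-! `Ξ_h` preserves `E[F(·)]` for every functional with `F(f - c) = e^{-c} F(f)`, in particular
for `F(f) = max_i e^{f(t_i) - x_i}`, which determines the finite-dimensional laws of the associated
max-stable process. With `p = P(Z(h) > -∞)`, homogeneity pulls the factor `e^{-V(h)} / p` out of
`F(Ξ_h Z)`. On `{J = 1}` this factor undoes the tilt and leaves `p⁻¹ E[F(Z); Z(h) > -∞]`; on
`{J = 0}` independence gives `p⁻¹ E[e^{-V(h)}] (1 - p) E[F(W)] = E[F(Z); Z(h) = -∞]`, because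
`E[e^{-V(h)}] = p`. For the mixture over `h ∼ ν` one then integrates a constant. -/

@[simp] lemma expE_top : expE ⊤ = ⊤ := rfl

@[simp] lemma expE_bot : expE ⊥ = 0 := rfl

@[simp] lemma expE_coe (r : ℝ) : expE r = ENNReal.ofReal (Real.exp r) := by
  simp [expE]

lemma measurable_expE : Measurable expE := by
  unfold expE
  refine Measurable.ite (measurableSet_singleton _) measurable_const ?_
  refine Measurable.ite (measurableSet_singleton _) measurable_const ?_
  exact ENNReal.measurable_ofReal.comp (Real.measurable_exp.comp measurable_ereal_toReal)

lemma expE_sub (a b : EReal) : expE (a - b) = expE a * expE (-b) := by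
  induction a using EReal.rec <;> induction b using EReal.rec <;>
    simp_all [sub_eq_add_neg, ← EReal.coe_neg, ← EReal.coe_add, Real.exp_pos, Real.exp_add,
      ENNReal.top_mul, ENNReal.mul_top, ENNReal.ofReal_mul (Real.exp_nonneg _)]

lemma expE_mul_expE_neg {b : EReal} (hb : b ≠ ⊤) :
    expE b * expE (-b) = if b = ⊥ then 0 else 1 := by
  induction b using EReal.rec with
  | bot => simp
  | coe r => simp [← EReal.coe_neg, ← ENNReal.ofReal_mul (Real.exp_nonneg _), ← Real.exp_add]
  | top => simp at hb

lemma expE_neg_log_toReal {p : ℝ≥0∞} (h0 : p ≠ 0) (htop : p ≠ ⊤) :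
    expE (-(Real.log p.toReal : EReal)) = p⁻¹ := by
  have hp : 0 < p.toReal := ENNReal.toReal_pos h0 htop
  rw [← EReal.coe_neg, expE_coe, Real.exp_neg, Real.exp_log hp, ENNReal.ofReal_inv_of_pos hp,
    ENNReal.ofReal_toReal htop]

lemma measurable_iSup_expE_sub {ι T : Type*} [Countable ι]
    (t : ι → T) (x : ι → EReal) :
    Measurable fun f : T → EReal => ⨆ i, expE (f (t i) - x i) :=
  .iSup fun i =>
    measurable_expE.comp ((measurable_id.add_const (-x i)).comp (measurable_pi_apply (t i)))

lemma iSup_expE_sub_sub {ι T : Type*} (t : ι → T) (x : ι → EReal) (f : T → EReal) (c : EReal) :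
    ⨆ i, expE (f (t i) - c - x i) = expE (-c) * ⨆ i, expE (f (t i) - x i) := by
  simp only [expE_sub, ENNReal.mul_iSup]
  exact iSup_congr fun i => by ring

lemma apply_ite_sub_sub_of_expE_homogeneous {T : Type*} {F : (T → EReal) → ℝ≥0∞}
    (hF : ∀ f c, F (fun s => f s - c) = expE (-c) * F f) (j : Bool) (v w : T → EReal) (h : T)
    (c : EReal) :
    F (fun s => (if j then v s - v h else w s - v h) - c)
      = expE (-c) * (if j then expE (-v h) * F v else expE (-v h) * F w) := by
  rw [hF]
  cases j <;> simp only [Bool.false_eq_true, if_true, if_false, hF]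

lemma lintegral_ite_of_indepFun {Ω β : Type*} [MeasurableSpace Ω] [MeasurableSpace β]
    {μ : Measure Ω} [IsProbabilityMeasure μ] {J : Ω → Bool} {Y : Ω → β}
    (hJ : Measurable J) (hY : Measurable Y) (hJY : IndepFun J Y μ)
    {a b : β → ℝ≥0∞} (ha : Measurable a) (hb : Measurable b) :
    ∫⁻ ω, (if J ω then a (Y ω) else b (Y ω)) ∂μ
      = μ {ω | J ω = true} * ∫⁻ ω, a (Y ω) ∂μ
        + (1 - μ {ω | J ω = true}) * ∫⁻ ω, b (Y ω) ∂μ := by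
  have hJt : MeasurableSet {ω | J ω = true} := hJ (measurableSet_singleton true)
  have hind (j : Bool) : Measurable fun ω => if J ω = j then (1 : ℝ≥0∞) else 0 :=
    (Measurable.of_discrete (f := fun b : Bool => if b = j then (1 : ℝ≥0∞) else 0)).comp hJ
  have mass (j : Bool) (c : β → ℝ≥0∞) (hc : Measurable c) :
      ∫⁻ ω, (if J ω = j then 1 else 0) * c (Y ω) ∂μ
        = μ {ω | J ω = j} * ∫⁻ ω, c (Y ω) ∂μ := by
    have hcY : Measurable fun ω => c (Y ω) := hc.comp hY
    have hJc : IndepFun (fun ω => if J ω = j then (1 : ℝ≥0∞) else 0) (fun ω => c (Y ω)) μ :=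
      hJY.comp (φ := fun b : Bool => if b = j then (1 : ℝ≥0∞) else 0) Measurable.of_discrete hc
    rw [lintegral_mul_eq_lintegral_mul_lintegral_of_indepFun'' (hind j).aemeasurable
      hcY.aemeasurable hJc]
    have hone : (fun ω => if J ω = j then (1 : ℝ≥0∞) else 0) = {ω | J ω = j}.indicator 1 := by
      ext ω; simp [Set.indicator_apply]
    rw [hone, lintegral_indicator_one (s := {ω | J ω = j}) (hJ (measurableSet_singleton j))]
  have hfalse : {ω | J ω = false} = {ω | J ω = true}ᶜ := by ext; simp
  have hm : Measurable fun ω => (if J ω = true then (1 : ℝ≥0∞) else 0) * a (Y ω) :=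
    (hind true).mul (ha.comp hY)
  calc ∫⁻ ω, (if J ω then a (Y ω) else b (Y ω)) ∂μ
      = ∫⁻ ω, (if J ω = true then 1 else 0) * a (Y ω)
          + (if J ω = false then 1 else 0) * b (Y ω) ∂μ :=
        lintegral_congr fun ω => by cases J ω <;> simp
    _ = _ := by
      rw [lintegral_add_left hm, mass true a ha, mass false b hb, hfalse,
        prob_compl_eq_one_sub hJt]

section PathLaw

variable {T Ω : Type*} [MeasurableSpace Ω] {μ : Measure Ω} {Z : T → Ω → EReal}

lemma lintegral_tiltLaw {h : T} {g : (T → EReal) → ℝ≥0∞} (hg : Measurable g) :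
    ∫⁻ f, g f ∂tiltLaw μ Z h = ∫⁻ f, expE (f h) * g f ∂pathLaw μ Z :=
  lintegral_withDensity_eq_lintegral_mul _ (measurable_expE.comp (measurable_pi_apply h)) hg

lemma pathLaw_apply {s : Set (T → EReal)} (hZm : ∀ t, Measurable (Z t)) (hs : MeasurableSet s) :
    pathLaw μ Z s = μ {ω | (fun t => Z t ω) ∈ s} :=
  Measure.map_apply (measurable_pi_lambda _ hZm) hs

lemma lintegral_tiltLaw_expE_neg_mul (hZm : ∀ t, Measurable (Z t)) {h : T}
    (hZne : ∀ᵐ ω ∂μ, Z h ω ≠ ⊤) {g : (T → EReal) → ℝ≥0∞} (hg : Measurable g) :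
    ∫⁻ f, expE (-f h) * g f ∂tiltLaw μ Z h = ∫⁻ f in {f | f h = ⊥}ᶜ, g f ∂pathLaw μ Z := by
  have hne : ∀ᵐ f ∂pathLaw μ Z, f h ≠ ⊤ :=
    (ae_map_iff (measurable_pi_lambda _ hZm).aemeasurable
      ((measurable_pi_apply h) (measurableSet_singleton ⊤)).compl).2 hZne
  have hm : Measurable fun f : T → EReal => expE (-f h) * g f :=
    (measurable_expE.comp (measurable_pi_apply h).neg).mul hg
  rw [lintegral_tiltLaw hm,
    ← lintegral_indicator (measurableSet_eq_fun (measurable_pi_apply h) measurable_const).compl]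
  refine lintegral_congr_ae (hne.mono fun f hf => ?_)
  show expE (f h) * (expE (-f h) * g f) = _
  rw [← mul_assoc, expE_mul_expE_neg hf]
  by_cases hb : f h = ⊥ <;> simp [hb]

variable {Ω'' : Type*} [MeasurableSpace Ω''] {μ'' : Measure Ω''} {V : Ω'' → T → EReal}

lemma lintegral_expE_neg_mul_of_map_eq_tiltLaw (hZm : ∀ t, Measurable (Z t)) {h : T}
    (hZne : ∀ᵐ ω ∂μ, Z h ω ≠ ⊤) (hVm : Measurable V) (hV : μ''.map V = tiltLaw μ Z h)
    {g : (T → EReal) → ℝ≥0∞} (hg : Measurable g) :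
    ∫⁻ ω, expE (-V ω h) * g (V ω) ∂μ'' = ∫⁻ f in {f | f h = ⊥}ᶜ, g f ∂pathLaw μ Z := by
  have hm : Measurable fun f : T → EReal => expE (-f h) * g f :=
    (measurable_expE.comp (measurable_pi_apply h).neg).mul hg
  rw [← lintegral_tiltLaw_expE_neg_mul hZm hZne hg, ← hV, lintegral_map hm hVm]

lemma lintegral_expE_neg_of_map_eq_tiltLaw (hZm : ∀ t, Measurable (Z t)) {h : T}
    (hZne : ∀ᵐ ω ∂μ, Z h ω ≠ ⊤) (hVm : Measurable V) (hV : μ''.map V = tiltLaw μ Z h) :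
    ∫⁻ ω, expE (-V ω h) ∂μ'' = μ {ω | Z h ω ≠ ⊥} := by
  have := lintegral_expE_neg_mul_of_map_eq_tiltLaw hZm hZne hVm hV (g := 1) measurable_const
  simp only [Pi.one_apply, mul_one, setLIntegral_one] at this
  rw [this, pathLaw_apply hZm (measurableSet_eq_fun (measurable_pi_apply h) measurable_const).compl]
  rfl

lemma one_sub_mul_lintegral_of_restrict_eq_smul_map [IsProbabilityMeasure μ]
    (hZm : ∀ t, Measurable (Z t)) {h : T} {W : Ω'' → T → EReal} (hWm : Measurable W)
    (hW : (pathLaw μ Z).restrict {f | f h = ⊥} = μ {ω | Z h ω = ⊥} • μ''.map W)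
    {g : (T → EReal) → ℝ≥0∞} (hg : Measurable g) :
    (1 - μ {ω | Z h ω ≠ ⊥}) * ∫⁻ ω, g (W ω) ∂μ'' = ∫⁻ f in {f | f h = ⊥}, g f ∂pathLaw μ Z := by
  have hZbot : MeasurableSet {ω | Z h ω = ⊥} := (hZm h) (measurableSet_singleton ⊥)
  have hq : 1 - μ {ω | Z h ω ≠ ⊥} = μ {ω | Z h ω = ⊥} := by
    have := prob_compl_eq_one_sub (μ := μ) hZbot.compl
    rw [compl_compl] at this
    exact this.symm
  rw [hq, ← lintegral_map hg hWm, ← smul_eq_mul, ← lintegral_smul_measure, ← hW]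

end PathLaw

theorem lintegral_xi_eq_lintegral {T Ω Ω'' : Type*} [MeasurableSpace Ω] [MeasurableSpace Ω'']
    {μ : Measure Ω} {μ'' : Measure Ω''} [IsProbabilityMeasure μ] [IsProbabilityMeasure μ'']
    {Z : T → Ω → EReal} (hZm : ∀ t, Measurable (Z t)) {h : T}
    (hZne : ∀ᵐ ω ∂μ, Z h ω ≠ ⊤) (hp : 0 < μ {ω | Z h ω ≠ ⊥})
    {J : Ω'' → Bool} {V W : Ω'' → T → EReal}
    (hJm : Measurable J) (hVm : Measurable V) (hWm : Measurable W)
    (hJ : μ'' {ω | J ω = true} = μ {ω | Z h ω ≠ ⊥})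
    (hV : μ''.map V = tiltLaw μ Z h)
    (hW : (pathLaw μ Z).restrict {f | f h = ⊥} = μ {ω | Z h ω = ⊥} • μ''.map W)
    (hJVW : IndepFun J (fun ω => (V ω, W ω)) μ'') (hVW : IndepFun V W μ'')
    {F : (T → EReal) → ℝ≥0∞} (hFm : Measurable F)
    (hF : ∀ f c, F (fun s => f s - c) = expE (-c) * F f) :
    ∫⁻ ω, F (fun s => (if J ω then V ω s - V ω h else W ω s - V ω h)
        - (Real.log (μ {ω | Z h ω ≠ ⊥}).toReal : EReal)) ∂μ''
      = ∫⁻ ω, F (fun s => Z s ω) ∂μ := by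
  set p := μ {ω | Z h ω ≠ ⊥}
  have hp_top : p ≠ ⊤ := measure_ne_top μ _
  have hpoint (ω : Ω'') : F (fun s => (if J ω then V ω s - V ω h else W ω s - V ω h)
        - (Real.log p.toReal : EReal))
      = p⁻¹ * (if J ω then expE (-V ω h) * F (V ω) else expE (-V ω h) * F (W ω)) := by
    rw [apply_ite_sub_sub_of_expE_homogeneous hF, expE_neg_log_toReal hp.ne' hp_top]
  have hbot : MeasurableSet {f : T → EReal | f h = ⊥} :=
    measurableSet_eq_fun (measurable_pi_apply h) measurable_const
  have hVh : Measurable fun v : T → EReal => expE (-v h) :=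
    measurable_expE.comp (measurable_pi_apply h).neg
  calc _ = p⁻¹ * (p * ∫⁻ ω, expE (-V ω h) * F (V ω) ∂μ''
          + (1 - p) * ∫⁻ ω, expE (-V ω h) * F (W ω) ∂μ'') := by
        rw [lintegral_congr hpoint, lintegral_const_mul' _ _ (ENNReal.inv_ne_top.2 hp.ne'), ← hJ]
        congr 1
        exact lintegral_ite_of_indepFun hJm (hVm.prodMk hWm) hJVW
          ((hVh.comp measurable_fst).mul (hFm.comp measurable_fst))
          ((hVh.comp measurable_fst).mul (hFm.comp measurable_snd))
    _ = p⁻¹ * p * (∫⁻ f in {f | f h = ⊥}ᶜ, F f ∂pathLaw μ Z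
          + (1 - p) * ∫⁻ ω, F (W ω) ∂μ'') := by
        have hVW' : IndepFun (fun ω => expE (-V ω h)) (fun ω => F (W ω)) μ'' :=
          hVW.comp (φ := fun v : T → EReal => expE (-v h)) (ψ := F) hVh hFm
        have hVV : Measurable fun ω => expE (-V ω h) := hVh.comp hVm
        have hFW : Measurable fun ω => F (W ω) := hFm.comp hWm
        rw [lintegral_expE_neg_mul_of_map_eq_tiltLaw hZm hZne hVm hV hFm,
          lintegral_mul_eq_lintegral_mul_lintegral_of_indepFun'' hVV.aemeasurable
            hFW.aemeasurable hVW', lintegral_expE_neg_of_map_eq_tiltLaw hZm hZne hVm hV]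
        ring
    _ = ∫⁻ f, F f ∂pathLaw μ Z := by
        rw [ENNReal.inv_mul_cancel hp.ne' hp_top, one_mul,
          one_sub_mul_lintegral_of_restrict_eq_smul_map hZm hWm hW hFm, add_comm,
          lintegral_add_compl _ hbot]
    _ = _ := lintegral_map hFm (measurable_pi_lambda _ hZm)

theorem statement_7_general {T Ω Ω' Ω'' : Type*}
    [MeasurableSpace T] [MeasurableSpace Ω] [MeasurableSpace Ω'] [MeasurableSpace Ω'']
    (μ : Measure Ω) (μ' : Measure Ω') (μ'' : Measure Ω'')
    [IsProbabilityMeasure μ] [IsProbabilityMeasure μ'']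
    (Z : T → Ω → EReal) (hZm : ∀ t, Measurable (Z t))
    (hZne : ∀ t, ∀ᵐ ω ∂μ, Z t ω ≠ ⊤)
    (hp : ∀ h : T, 0 < μ {ω | Z h ω ≠ ⊥})
    (ζ : T → Ω' → ℝ) (hζ : IsAssocMaxStable μ' ζ μ Z)
    -- decomposition data, for each `h`: a Bernoulli indicator `J h` with success probability
    -- `p_h`, the tilted process `Vt h = V_h^{[h]}`, and the degenerate part `W h = W_h`,
    -- mutually independent
    (J : T → Ω'' → Bool) (Vt : T → T → Ω'' → EReal) (W : T → T → Ω'' → EReal)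
    (hJm : ∀ h, Measurable (J h)) (hVm : ∀ h t, Measurable (Vt h t))
    (hWm : ∀ h t, Measurable (W h t))
    (hJ : ∀ h, μ'' {ω | J h ω = true} = μ {ω | Z h ω ≠ ⊥})
    (hV : ∀ h, Measure.map (fun ω t => Vt h t ω) μ'' = tiltLaw μ Z h)
    (hW : ∀ h, (pathLaw μ Z).restrict {f | f h = ⊥}
        = μ {ω | Z h ω = ⊥} • Measure.map (fun ω t => W h t ω) μ'')
    (hindep : ∀ h, ProbabilityTheory.IndepFun (J h)
        (fun ω => ((fun t => Vt h t ω), fun t => W h t ω)) μ'')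
    (hVW : ∀ h, ProbabilityTheory.IndepFun (fun ω t => Vt h t ω) (fun ω t => W h t ω) μ'')
    -- the tilted spectral process `Ξ_h Z`
    (Xi : T → T → Ω'' → EReal)
    (hXi : ∀ h t ω, Xi h t ω =
      (if J h ω then Vt h t ω - Vt h h ω else W h t ω - Vt h h ω)
        - ((Real.log (μ {ω' | Z h ω' ≠ ⊥}).toReal : ℝ) : EReal)) :
    (∀ h : T, IsAssocMaxStable μ' ζ μ'' (Xi h)) ∧
    (∀ ν : Measure T, IsProbabilityMeasure ν →
      ∀ (n : ℕ) (t : Fin n → T) (x : Fin n → ℝ),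
        μ' {ω | ∀ i, ζ (t i) ω ≤ x i}
          = expNeg (∫⁻ h, ∫⁻ ω, ⨆ i, expE (Xi h (t i) ω - (x i : EReal)) ∂μ'' ∂ν)) := by
  have key (h : T) (n : ℕ) (t : Fin n → T) (x : Fin n → ℝ) :
      ∫⁻ ω, ⨆ i, expE (Xi h (t i) ω - (x i : EReal)) ∂μ''
        = ∫⁻ ω, ⨆ i, expE (Z (t i) ω - (x i : EReal)) ∂μ := by
    simp only [hXi]
    exact lintegral_xi_eq_lintegral hZm (hZne h) (hp h) (hJm h) (measurable_pi_lambda _ (hVm h))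
      (measurable_pi_lambda _ (hWm h)) (hJ h) (hV h) (hW h) (hindep h) (hVW h)
      (measurable_iSup_expE_sub t _) (iSup_expE_sub_sub t _)
  refine ⟨fun h n t x => by rw [hζ n t x, key], fun ν _ n t x => ?_⟩
  rw [hζ n t x, lintegral_congr fun h => key h n t x, lintegral_const, measure_univ, mul_one]

/-- Lemma 2: general spectral processes.
For `Z` with values in `[-∞,∞)`, `E[e^{Z(t)}] = 1` and `p_h = P(Z(h) > -∞) ∈ (0,1]`, write
`Z =fdd J_h V_h + (1-J_h) W_h` and define
`Ξ_h Z(t) = J_h Θ_h(t) + (1-J_h)[W_h(t) - V_h^{[h]}(h)] - ln p_h` with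
`Θ_h(t) = V_h^{[h]}(t) - V_h^{[h]}(h)`.  Then `ζ_Z =fdd ζ_{Ξ_h Z}` for every `h`, and for any
probability measure `ν` on `T`, `ζ_Z =fdd η` with `η(t) = max_i (P_i + Ξ_{T_i} Z_i(t))`, where
`(P_i, T_i)` is a Poisson point process on `ℝ × T` with intensity `e^{-p} dp ⋅ ν(dt)` (the
fdd's of `η` are `exp(-∫ E[max_i e^{Ξ_h Z(t_i) - x_i}] ν(dh))`). -/
theorem statement_7 {T Ω Ω' Ω'' : Type*}
    [MeasurableSpace T] [MeasurableSpace Ω] [MeasurableSpace Ω'] [MeasurableSpace Ω'']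
    (μ : Measure Ω) (μ' : Measure Ω') (μ'' : Measure Ω'')
    [IsProbabilityMeasure μ] [IsProbabilityMeasure μ'] [IsProbabilityMeasure μ'']
    (Z : T → Ω → EReal) (hZm : ∀ t, Measurable (Z t))
    (hZne : ∀ t, ∀ᵐ ω ∂μ, Z t ω ≠ ⊤)
    (hZexp : ∀ t, ∫⁻ ω, expE (Z t ω) ∂μ = 1)
    (hp : ∀ h : T, 0 < μ {ω | Z h ω ≠ ⊥})
    (ζ : T → Ω' → ℝ) (hζ : IsAssocMaxStable μ' ζ μ Z)
    -- decomposition data, for each `h`: a Bernoulli indicator `J h` with success probability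
    -- `p_h`, the tilted process `Vt h = V_h^{[h]}`, and the degenerate part `W h = W_h`,
    -- mutually independent
    (J : T → Ω'' → Bool) (Vt : T → T → Ω'' → EReal) (W : T → T → Ω'' → EReal)
    (hJm : ∀ h, Measurable (J h)) (hVm : ∀ h t, Measurable (Vt h t))
    (hWm : ∀ h t, Measurable (W h t))
    (hJ : ∀ h, μ'' {ω | J h ω = true} = μ {ω | Z h ω ≠ ⊥})
    (hV : ∀ h, Measure.map (fun ω t => Vt h t ω) μ'' = tiltLaw μ Z h)
    (hW : ∀ h, (pathLaw μ Z).restrict {f | f h = ⊥}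
        = μ {ω | Z h ω = ⊥} • Measure.map (fun ω t => W h t ω) μ'')
    (hWbot : ∀ h, ∀ᵐ ω ∂μ'', W h h ω = ⊥)
    (hindep : ∀ h, ProbabilityTheory.IndepFun (J h)
        (fun ω => ((fun t => Vt h t ω), fun t => W h t ω)) μ'')
    (hVW : ∀ h, ProbabilityTheory.IndepFun (fun ω t => Vt h t ω) (fun ω t => W h t ω) μ'')
    -- the tilted spectral process `Ξ_h Z`
    (Xi : T → T → Ω'' → EReal)
    (hXi : ∀ h t ω, Xi h t ω =
      (if J h ω then Vt h t ω - Vt h h ω else W h t ω - Vt h h ω)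
        - ((Real.log (μ {ω' | Z h ω' ≠ ⊥}).toReal : ℝ) : EReal)) :
    (∀ h : T, IsAssocMaxStable μ' ζ μ'' (Xi h)) ∧
    (∀ ν : Measure T, IsProbabilityMeasure ν →
      ∀ (n : ℕ) (t : Fin n → T) (x : Fin n → ℝ),
        μ' {ω | ∀ i, ζ (t i) ω ≤ x i}
          = expNeg (∫⁻ h, ∫⁻ ω, ⨆ i, expE (Xi h (t i) ω - (x i : EReal)) ∂μ'' ∂ν)) :=
  statement_7_general μ μ' μ'' Z hZm hZne hp ζ hζ J Vt W hJm hVm hWm hJ hV hW hindep hVW Xi hXi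
end
end
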